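/- arXiv:2009.11272 — 5 statements merged into one kernel-verified Lean document; each statement's English description precedes it below -/
import Mathlib

section
/- Let X̄ be a symmetric positive semidefinite matrix with entrywise nonnegative entries, with eigendecomposition X̄ = P diag(λ₁,…,λ_r,0,…,0) Pᵀ where λ₁ ≥ … ≥ λ_r > 0 and P orthogonal, and let ℰ = {(i,j) : X̄_{ij} > 0, i ≤ j}. A necessary condition for the constraint nondegeneracy condition lin(T_{S₊ⁿ}(X̄)) + lin(T_{ℕⁿ}(X̄)) = Sⁿ to hold is (n−r)(n−r+1)/2 ≤ |ℰ|. -/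
/-!
Let `φ H` be the upper triangle of the lower-right `(n-r) × (n-r)` block of `Pᵀ H P`. It vanishes
on `lin(T_{S₊ⁿ}(X̄))` and maps `Sⁿ` onto `ℝ^{(n-r)(n-r+1)/2}` (take `H = P M Pᵀ`), so under
nondegeneracy it already maps `lin(T_{ℕⁿ}(X̄))` onto that space. A symmetric matrix vanishing
wherever `X̄` does is determined by its entries on `ℰ`, hence `dim lin(T_{ℕⁿ}(X̄)) ≤ |ℰ|`.
-/

open Matrix Module

section UpperEntries

variable {m R : Type*} [LinearOrder m] [CommSemiring R]

def upperEntriesOn (s : Set m) : Matrix m m R →ₗ[R] ({p : s × s // p.1 ≤ p.2} → R) :=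
  LinearMap.pi fun p => entryLinearMap R R (p.1.1 : m) p.1.2

@[simp]
lemma upperEntriesOn_apply (s : Set m) (A : Matrix m m R) (p : {p : s × s // p.1 ≤ p.2}) :
    upperEntriesOn s A p = A p.1.1 p.1.2 := rfl

lemma exists_transpose_eq_upperEntriesOn_eq (s : Set m) (g : {p : s × s // p.1 ≤ p.2} → R) :
    ∃ M : Matrix m m R, Mᵀ = M ∧ upperEntriesOn s M = g := by
  classical
  let fill : s → s → R := fun a b => g ⟨(min a b, max a b), min_le_max⟩
  refine ⟨of fun i j => if h : i ∈ s ∧ j ∈ s then fill ⟨i, h.1⟩ ⟨j, h.2⟩ else 0, ?_, ?_⟩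
  · ext i j
    by_cases h : i ∈ s ∧ j ∈ s
    · simp [h, fill, min_comm, max_comm]
    · simp [h, fill, and_comm]
  · funext ⟨⟨a, b⟩, hab⟩
    simp [fill, hab]

end UpperEntries

lemma card_upperTriangle (K : Type*) [Fintype K] [LinearOrder K] :
    Fintype.card {p : K × K // p.1 ≤ p.2} = Fintype.card K * (Fintype.card K + 1) / 2 := by
  rw [← Fintype.card_congr Sym2.sortEquiv, Sym2.card, Nat.choose_two_right, Nat.add_sub_cancel,
    mul_comm]

lemma Fin.card_setOf_le_val (n r : ℕ) : Fintype.card {i : Fin n | r ≤ (i : ℕ)} = n - r := by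
  simp only [Set.coe_ofPred, ← not_lt]
  rw [Fintype.card_subtype_compl, Fintype.card_subtype, Fin.card_filter_val_lt, Fintype.card_fin]
  omega

section SymmetricSupported

variable {m 𝕜 : Type*} [Field 𝕜]

/-- `lin(T_{ℕⁿ}(X))` when `X ∈ ℕⁿ`. -/
def symmetricSupportedBy (X : Matrix m m 𝕜) : Submodule 𝕜 (Matrix m m 𝕜) where
  carrier := {H | Hᵀ = H ∧ ∀ i j, X i j = 0 → H i j = 0}
  add_mem' := by
    rintro H H' ⟨hH, hH0⟩ ⟨hH', hH'0⟩
    exact ⟨by rw [transpose_add, hH, hH'], fun i j hX => by simp [hH0 i j hX, hH'0 i j hX]⟩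
  zero_mem' := ⟨transpose_zero, fun _ _ _ => rfl⟩
  smul_mem' := by
    rintro c H ⟨hH, hH0⟩
    exact ⟨by rw [transpose_smul, hH], fun i j hX => by simp [hH0 i j hX]⟩

lemma finrank_symmetricSupportedBy_le [Fintype m] [LinearOrder m] (X : Matrix m m 𝕜)
    (E : Finset (m × m)) (hE : ∀ i j, i ≤ j → X i j ≠ 0 → (i, j) ∈ E) :
    finrank 𝕜 (symmetricSupportedBy X) ≤ E.card := by
  let restrict : symmetricSupportedBy X →ₗ[𝕜] (E → 𝕜) :=
    (LinearMap.pi fun e : E => entryLinearMap 𝕜 𝕜 e.1.1 e.1.2) ∘ₗ (symmetricSupportedBy X).subtype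
  have hinj : Function.Injective restrict := by
    refine (injective_iff_map_eq_zero restrict).mpr fun ⟨H, hsymm, hsupp⟩ hH => ?_
    have hupper : ∀ i j, i ≤ j → H i j = 0 := fun i j hij => by
      by_cases hX : X i j = 0
      · exact hsupp i j hX
      · exact congr_fun hH ⟨(i, j), hE i j hij hX⟩
    ext i j
    change H i j = 0
    rcases le_total i j with hij | hji
    · exact hupper i j hij
    · rw [← hsymm, transpose_apply]
      exact hupper j i hji
  simpa using LinearMap.finrank_le_finrank_of_injective hinj

end SymmetricSupported

theorem necessary_condition_constraint_nondegeneracy_general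
    (n : ℕ) (X : Matrix (Fin n) (Fin n) ℝ)
    (hnonneg : ∀ i j, 0 ≤ X i j)
    (P : Matrix (Fin n) (Fin n) ℝ) (hP : Pᵀ * P = 1)
    (r : ℕ)
    (E : Finset (Fin n × Fin n))
    (hE : E = Finset.univ.filter (fun p : Fin n × Fin n => p.1 ≤ p.2 ∧ 0 < X p.1 p.2))
    -- constraint nondegeneracy: lin(T_{S₊ⁿ}(X̄)) + lin(T_{ℕⁿ}(X̄)) = Sⁿ
    (hcn : ∀ Y : Matrix (Fin n) (Fin n) ℝ, Yᵀ = Y →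
      ∃ H₁ H₂ : Matrix (Fin n) (Fin n) ℝ,
        H₁ᵀ = H₁ ∧
        (∀ i j : Fin n, r ≤ (i : ℕ) → r ≤ (j : ℕ) → (Pᵀ * H₁ * P) i j = 0) ∧
        H₂ᵀ = H₂ ∧
        (∀ i j : Fin n, X i j = 0 → H₂ i j = 0) ∧
        Y = H₁ + H₂) :
    (n - r) * (n - r + 1) / 2 ≤ E.card := by
  let s : Set (Fin n) := {i | r ≤ (i : ℕ)}
  let φ : Matrix (Fin n) (Fin n) ℝ →ₗ[ℝ] ({p : s × s // p.1 ≤ p.2} → ℝ) :=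
    upperEntriesOn s ∘ₗ LinearMap.mulLeft ℝ Pᵀ ∘ₗ LinearMap.mulRight ℝ P
  have hsurj : Function.Surjective (φ ∘ₗ (symmetricSupportedBy X).subtype) := by
    intro g
    obtain ⟨M, hMsymm, hMg⟩ := exists_transpose_eq_upperEntriesOn_eq s g
    obtain ⟨H₁, H₂, -, hH₁, hH₂symm, hH₂supp, hY⟩ :=
      hcn (P * M * Pᵀ) (by simp [transpose_mul, hMsymm, Matrix.mul_assoc])
    have hφH₁ : φ H₁ = 0 := funext fun p => by
      simpa [φ, Matrix.mul_assoc] using hH₁ _ _ p.1.1.2 p.1.2.2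
    have hφY : φ (P * M * Pᵀ) = g := by
      change upperEntriesOn s (Pᵀ * (P * M * Pᵀ * P)) = g
      rw [Matrix.mul_assoc (P * M), hP, Matrix.mul_one, ← Matrix.mul_assoc, hP, Matrix.one_mul,
        hMg]
    refine ⟨⟨H₂, hH₂symm, hH₂supp⟩, ?_⟩
    simpa [hY, hφH₁] using hφY
  have hdim := LinearMap.finrank_le_finrank_of_surjective hsurj
  rw [finrank_fintype_fun_eq_card, card_upperTriangle, Fin.card_setOf_le_val] at hdim
  refine hdim.trans (finrank_symmetricSupportedBy_le X E fun i j hij hX => ?_)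
  rw [hE]
  simpa [hij] using (hnonneg i j).lt_of_ne' hX

/-- A necessary condition for constraint nondegeneracy of the DNN projection problem:
if `lin(T_{S₊ⁿ}(X̄)) + lin(T_{ℕⁿ}(X̄)) = Sⁿ`, then `(n−r)(n−r+1)/2 ≤ |ℰ|`, where `r` is the
rank of `X̄` and `ℰ` is the set of upper-triangular positions of strictly positive entries. -/
theorem necessary_condition_constraint_nondegeneracy
    (n : ℕ) (X : Matrix (Fin n) (Fin n) ℝ)
    (hpsd : X.PosSemidef) (hnonneg : ∀ i j, 0 ≤ X i j)
    (P : Matrix (Fin n) (Fin n) ℝ) (hP : Pᵀ * P = 1)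
    (d : Fin n → ℝ) (r : ℕ) (hrn : r ≤ n)
    (hdecomp : X = P * Matrix.diagonal d * Pᵀ)
    (hpos : ∀ i : Fin n, (i : ℕ) < r → 0 < d i)
    (hzero : ∀ i : Fin n, r ≤ (i : ℕ) → d i = 0)
    (hmono : ∀ i j : Fin n, i ≤ j → d j ≤ d i)
    (E : Finset (Fin n × Fin n))
    (hE : E = Finset.univ.filter (fun p : Fin n × Fin n => p.1 ≤ p.2 ∧ 0 < X p.1 p.2))
    -- constraint nondegeneracy: lin(T_{S₊ⁿ}(X̄)) + lin(T_{ℕⁿ}(X̄)) = Sⁿ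
    (hcn : ∀ Y : Matrix (Fin n) (Fin n) ℝ, Yᵀ = Y →
      ∃ H₁ H₂ : Matrix (Fin n) (Fin n) ℝ,
        H₁ᵀ = H₁ ∧
        (∀ i j : Fin n, r ≤ (i : ℕ) → r ≤ (j : ℕ) → (Pᵀ * H₁ * P) i j = 0) ∧
        H₂ᵀ = H₂ ∧
        (∀ i j : Fin n, X i j = 0 → H₂ i j = 0) ∧
        Y = H₁ + H₂) :
    (n - r) * (n - r + 1) / 2 ≤ E.card :=
  necessary_condition_constraint_nondegeneracy_general n X hnonneg P hP r E hE hcn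
end

section
/- Consider the problem of minimizing θ(x) = h(Fx) + ⟨c, x⟩ + p(x) over x ∈ X, where h is differentiable convex, p is closed proper convex, and F is linear. Then Fx is constant over the optimal solution set: if x' and x'' are both minimizers of θ, then Fx' = Fx''. -/
/-!
If `F x' ≠ F x''` for two minimizers, then at their midpoint the real-valued part `h ∘ F + ⟪c, ·⟫`
drops strictly below the average of its values (strict convexity of `h`, linearity of the
rest), while `p` rises at most to the average of its values. Both minimizers have the same
finite value, so the midpoint would have a strictly smaller objective value.
-/

open scoped RealInnerProductSpace

theorem EReal.exists_eq_coe_of_coe_add_ne_top {a : ℝ} {b : EReal} (hab : (a : EReal) + b ≠ ⊤)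
    (hb : b ≠ ⊥) : ∃ r : ℝ, b = r :=
  ⟨b.toReal, (EReal.coe_toReal (fun h ↦ hab (by rw [h]; rfl)) hb).symm⟩

theorem StrictConvexOn.comp_linearMap_lt {E W : Type*} [AddCommGroup E] [Module ℝ E]
    [AddCommGroup W] [Module ℝ W] {h : W → ℝ} (hh : StrictConvexOn ℝ Set.univ h)
    (F : E →ₗ[ℝ] W) {x y : E} (hxy : F x ≠ F y) {a b : ℝ} (ha : 0 < a) (hb : 0 < b)
    (hab : a + b = 1) :
    h (F (a • x + b • y)) < a * h (F x) + b * h (F y) := by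
  rw [map_add, map_smul, map_smul]
  exact hh.2 (Set.mem_univ _) (Set.mem_univ _) hxy ha hb hab

theorem coe_add_lt_combo_of_lt_of_le {E : Type*} [AddCommGroup E] [Module ℝ E]
    {g : E → ℝ} {p : E → EReal} {x y : E} {r s a b : ℝ} (hx : p x = r) (hy : p y = s)
    (hg : g (a • x + b • y) < a * g x + b * g y)
    (hp : p (a • x + b • y) ≤ (a : EReal) * p x + (b : EReal) * p y) :
    (g (a • x + b • y) : EReal) + p (a • x + b • y) < ((a * (g x + r) + b * (g y + s) : ℝ)) := by
  rw [hx, hy, ← EReal.coe_mul, ← EReal.coe_mul, ← EReal.coe_add] at hp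
  calc (g (a • x + b • y) : EReal) + p (a • x + b • y)
      ≤ ((g (a • x + b • y) + (a * r + b * s) : ℝ) : EReal) := by
        rw [EReal.coe_add]; exact add_le_add le_rfl hp
    _ < ((a * (g x + r) + b * (g y + s) : ℝ)) := by
        rw [EReal.coe_lt_coe_iff]; linarith

theorem Fx_invariant_over_minimizers_general
    {X W : Type*} [NormedAddCommGroup X] [InnerProductSpace ℝ X]
    [NormedAddCommGroup W] [InnerProductSpace ℝ W]
    (F : X →ₗ[ℝ] W) (c : X)
    (h : W → ℝ)
    (hstrict : StrictConvexOn ℝ Set.univ h)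
    (p : X → EReal)
    (hpconv : ∀ x y : X, ∀ a b : ℝ, 0 ≤ a → 0 ≤ b → a + b = 1 →
      p (a • x + b • y) ≤ (a : EReal) * p x + (b : EReal) * p y)
    (hpproper : ∀ x, p x ≠ ⊥)
    (θ : X → EReal)
    (hθ : ∀ x, θ x = ((h (F x) + ⟪c, x⟫ : ℝ) : EReal) + p x)
    (x' x'' : X)
    (hx'min : θ x' ≠ ⊤ ∧ ∀ y, θ x' ≤ θ y)
    (hx''min : θ x'' ≠ ⊤ ∧ ∀ y, θ x'' ≤ θ y) :
    F x' = F x'' := by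
  by_contra hne
  obtain ⟨r', hr'⟩ := EReal.exists_eq_coe_of_coe_add_ne_top (hθ x' ▸ hx'min.1) (hpproper x')
  obtain ⟨r'', hr''⟩ := EReal.exists_eq_coe_of_coe_add_ne_top (hθ x'' ▸ hx''min.1) (hpproper x'')
  set g : X → ℝ := fun x ↦ h (F x) + ⟪c, x⟫
  have hg : g ((1 / 2 : ℝ) • x' + (1 / 2 : ℝ) • x'') < 1 / 2 * g x' + 1 / 2 * g x'' := by
    have hhmid := hstrict.comp_linearMap_lt F hne (a := 1 / 2) (b := 1 / 2) (by norm_num) (by norm_num)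
      (by norm_num)
    simp only [g, inner_add_right, inner_smul_right]
    linarith
  have hval : g x' + r' = g x'' + r'' := by
    have hθeq := le_antisymm (hx'min.2 x'') (hx''min.2 x')
    rwa [hθ, hθ, hr', hr'', ← EReal.coe_add, ← EReal.coe_add, EReal.coe_eq_coe_iff] at hθeq
  have hlt := coe_add_lt_combo_of_lt_of_le hr' hr'' hg
    (hpconv x' x'' _ _ (by norm_num) (by norm_num) (by norm_num))
  have hdrop : θ ((1 / 2 : ℝ) • x' + (1 / 2 : ℝ) • x'') < θ x' := by
    rw [hθ, hθ x', hr', ← EReal.coe_add]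
    convert hlt using 2
    rw [← hval]
    ring
  exact (hx'min.2 _).not_gt hdrop

/-- For `θ(x) = h(Fx) + ⟨c,x⟩ + p(x)` with `h` differentiable strictly convex,
`p` proper closed convex (extended-real-valued) and `F` linear, the value `Fx` is
invariant over the set of minimizers of `θ`. -/
theorem Fx_invariant_over_minimizers
    {X W : Type*} [NormedAddCommGroup X] [InnerProductSpace ℝ X] [FiniteDimensional ℝ X]
    [NormedAddCommGroup W] [InnerProductSpace ℝ W] [FiniteDimensional ℝ W]
    (F : X →ₗ[ℝ] W) (c : X)
    (h : W → ℝ) (hdiff : Differentiable ℝ h)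
    (hstrict : StrictConvexOn ℝ Set.univ h)
    (p : X → EReal)
    (hpconv : ∀ x y : X, ∀ a b : ℝ, 0 ≤ a → 0 ≤ b → a + b = 1 →
      p (a • x + b • y) ≤ (a : EReal) * p x + (b : EReal) * p y)
    (hplsc : LowerSemicontinuous p)
    (hpproper : ∀ x, p x ≠ ⊥)
    (θ : X → EReal)
    (hθ : ∀ x, θ x = ((h (F x) + ⟪c, x⟫ : ℝ) : EReal) + p x)
    (x' x'' : X)
    (hx'min : θ x' ≠ ⊤ ∧ ∀ y, θ x' ≤ θ y)
    (hx''min : θ x'' ≠ ⊤ ∧ ∀ y, θ x'' ≤ θ y) :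
    F x' = F x'' :=
  Fx_invariant_over_minimizers_general F c h hstrict p hpconv hpproper θ hθ x' x'' hx'min hx''min
end

section
/- Let θ : H → (−∞, +∞] be proper lower semicontinuous convex on a Hilbert space, and (x̄, v̄) ∈ gph(∂θ). If there exist κ > 0 and ε > 0 such that θ(x) ≥ θ(x̄) + ⟨v̄, x − x̄⟩ + κ·dist²(x, (∂θ)⁻¹(v̄)) for all x with ‖x − x̄‖ ≤ ε, then ∂θ is metrically subregular at x̄ for v̄, i.e., there exist κ' > 0, ε' > 0 with dist(x, (∂θ)⁻¹(v̄)) ≤ κ'·dist(v̄, ∂θ(x)) for all x ∈ B_{ε'}(x̄). -/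
open scoped RealInnerProductSpace

/-- The convex subdifferential of an extended-real-valued function. -/
def subdiff {H : Type*} [NormedAddCommGroup H] [InnerProductSpace ℝ H]
    (θ : H → EReal) (x : H) : Set H :=
  {v | ∀ y, θ x + ((⟪v, y - x⟫ : ℝ) : EReal) ≤ θ y}

/-! Let `d = dist(x, S)` with `v ∈ ∂θ(x)`, and let `s ∈ S`, i.e. `vb ∈ ∂θ(s)`. Chaining the
subgradient inequality of `vb` at `s` (evaluated at `xb`), the growth bound at `x`, and the
subgradient inequality of `v` at `x` (evaluated at `s`) gives
`κ d² ≤ ⟪vb - v, s - x⟫ ≤ ‖vb - v‖ ‖s - x‖`; letting `‖s - x‖` approach `d` yields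
`κ d ≤ ‖vb - v‖`. -/

lemma EReal.nonpos_of_add_coe_le_self {a : EReal} {r : ℝ} (ha_bot : a ≠ ⊥) (ha_top : a ≠ ⊤)
    (h : a + r ≤ a) : r ≤ 0 := by
  lift a to ℝ using ⟨ha_top, ha_bot⟩
  rw [← EReal.coe_add, EReal.coe_le_coe_iff] at h
  linarith

lemma Metric.le_mul_infDist_of_forall_le_mul_dist {α : Type*} [PseudoMetricSpace α] {x : α}
    {s : Set α} {a c : ℝ} (hs : s.Nonempty) (ha : 0 ≤ a)
    (h : ∀ y ∈ s, c ≤ a * dist x y) : c ≤ a * infDist x s := by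
  rcases ha.eq_or_lt with rfl | ha
  · obtain ⟨y, hy⟩ := hs
    simpa using h y hy
  · rw [← div_le_iff₀' ha, le_infDist hs]
    exact fun y hy => (div_le_iff₀' ha).2 (h y hy)

lemma Metric.infDist_le_inv_mul_of_forall_sq_le {α : Type*} [PseudoMetricSpace α] {x : α}
    {s : Set α} {κ a : ℝ} (hκ : 0 < κ) (ha : 0 ≤ a)
    (h : ∀ y ∈ s, κ * infDist x s ^ 2 ≤ a * dist x y) : infDist x s ≤ κ⁻¹ * a := by
  rcases (infDist_nonneg (x := x) (s := s)).eq_or_lt with hd | hd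
  · rw [← hd]
    positivity
  have hs : s.Nonempty := Set.nonempty_iff_ne_empty.2 fun he => by simp [he] at hd
  have key := le_mul_infDist_of_forall_le_mul_dist hs ha h
  rw [le_inv_mul_iff₀ hκ]
  nlinarith

section Subdiff

variable {H : Type*} [NormedAddCommGroup H] [InnerProductSpace ℝ H] {θ : H → EReal}

lemma ne_top_of_mem_subdiff {x v : H} (hv : v ∈ subdiff θ x) (hθ : ∃ y, θ y ≠ ⊤) :
    θ x ≠ ⊤ := by
  obtain ⟨y, hy⟩ := hθ
  intro hx
  exact hy (by simpa [hx] using hv y)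

lemma add_inner_add_le_of_mem_subdiff {x₀ x s w : H} {c : ℝ} (hw : w ∈ subdiff θ s)
    (h : θ x₀ + ((⟪w, x - x₀⟫ + c : ℝ) : EReal) ≤ θ x) :
    θ s + ((⟪w, x - s⟫ + c : ℝ) : EReal) ≤ θ x := by
  calc θ s + ((⟪w, x - s⟫ + c : ℝ) : EReal)
      = θ s + (⟪w, x₀ - s⟫ : ℝ) + ((⟪w, x - x₀⟫ + c : ℝ) : EReal) := by
        rw [add_assoc, ← EReal.coe_add, ← add_assoc, ← inner_add_right, sub_add_sub_cancel']
    _ ≤ θ x₀ + ((⟪w, x - x₀⟫ + c : ℝ) : EReal) := by gcongr; exact hw x₀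
    _ ≤ θ x := h

lemma le_inner_sub_of_mem_subdiff {x s v w : H} {c : ℝ} (hx_bot : θ x ≠ ⊥) (hx_top : θ x ≠ ⊤)
    (hv : v ∈ subdiff θ x) (h : θ s + ((⟪w, x - s⟫ + c : ℝ) : EReal) ≤ θ x) :
    c ≤ ⟪w - v, s - x⟫ := by
  have hcycle : θ x + ((⟪v, s - x⟫ + (⟪w, x - s⟫ + c) : ℝ) : EReal) ≤ θ x := by
    calc θ x + ((⟪v, s - x⟫ + (⟪w, x - s⟫ + c) : ℝ) : EReal)
        = θ x + (⟪v, s - x⟫ : ℝ) + ((⟪w, x - s⟫ + c : ℝ) : EReal) := by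
          rw [add_assoc, EReal.coe_add]
      _ ≤ θ s + ((⟪w, x - s⟫ + c : ℝ) : EReal) := by gcongr; exact hv s
      _ ≤ θ x := h
  have hsum := EReal.nonpos_of_add_coe_le_self hx_bot hx_top hcycle
  have hswap : ⟪w, x - s⟫ = -⟪w, s - x⟫ := by rw [← inner_neg_right, neg_sub]
  rw [inner_sub_left]
  linarith

end Subdiff

theorem quadratic_growth_implies_metric_subregularity_general
    {H : Type*} [NormedAddCommGroup H] [InnerProductSpace ℝ H]
    (θ : H → EReal)
    (hproper_bot : ∀ x, θ x ≠ ⊥) (hproper_top : ∃ x, θ x ≠ ⊤)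
    (xb vb : H)
    (S : Set H) (hS : S = {x | vb ∈ subdiff θ x})
    (hgrowth : ∃ κ > (0 : ℝ), ∃ ε > (0 : ℝ), ∀ x : H, ‖x - xb‖ ≤ ε →
      θ xb + (((⟪vb, x - xb⟫ + κ * (Metric.infDist x S) ^ 2 : ℝ)) : EReal) ≤ θ x) :
    ∃ κ' > (0 : ℝ), ∃ ε' > (0 : ℝ), ∀ x : H, ‖x - xb‖ ≤ ε' →
      ∀ v ∈ subdiff θ x, Metric.infDist x S ≤ κ' * ‖vb - v‖ := by
  obtain ⟨κ, hκ, ε, hε, hgrowth⟩ := hgrowth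
  refine ⟨κ⁻¹, inv_pos.2 hκ, ε, hε, fun x hx v hv => ?_⟩
  refine Metric.infDist_le_inv_mul_of_forall_sq_le hκ (norm_nonneg _) fun s hs => ?_
  rw [hS] at hs
  calc κ * Metric.infDist x S ^ 2 ≤ ⟪vb - v, s - x⟫ :=
        le_inner_sub_of_mem_subdiff (hproper_bot x) (ne_top_of_mem_subdiff hv hproper_top) hv
          (add_inner_add_le_of_mem_subdiff hs (hgrowth x hx))
    _ ≤ ‖vb - v‖ * ‖s - x‖ := real_inner_le_norm _ _
    _ = ‖vb - v‖ * dist x s := by rw [dist_comm, dist_eq_norm]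

/-- Quadratic growth implies metric subregularity of the subdifferential of a proper
lower semicontinuous convex function on a real Hilbert space: if
`θ(x) ≥ θ(xb) + ⟨vb, x − xb⟩ + κ dist²(x, (∂θ)⁻¹(vb))` near `xb`, then `∂θ` is metrically
subregular at `xb` for `vb`, i.e., `dist(x, (∂θ)⁻¹(vb)) ≤ κ' dist(vb, ∂θ(x))` near `xb`. -/
theorem quadratic_growth_implies_metric_subregularity
    {H : Type*} [NormedAddCommGroup H] [InnerProductSpace ℝ H] [CompleteSpace H]
    (θ : H → EReal)
    (hconv : ∀ x y : H, ∀ a b : ℝ, 0 ≤ a → 0 ≤ b → a + b = 1 →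
      θ (a • x + b • y) ≤ (a : EReal) * θ x + (b : EReal) * θ y)
    (hlsc : LowerSemicontinuous θ)
    (hproper_bot : ∀ x, θ x ≠ ⊥) (hproper_top : ∃ x, θ x ≠ ⊤)
    (xb vb : H) (hgph : vb ∈ subdiff θ xb)
    (S : Set H) (hS : S = {x | vb ∈ subdiff θ x})
    (hgrowth : ∃ κ > (0 : ℝ), ∃ ε > (0 : ℝ), ∀ x : H, ‖x - xb‖ ≤ ε →
      θ xb + (((⟪vb, x - xb⟫ + κ * (Metric.infDist x S) ^ 2 : ℝ)) : EReal) ≤ θ x) :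
    ∃ κ' > (0 : ℝ), ∃ ε' > (0 : ℝ), ∀ x : H, ‖x - xb‖ ≤ ε' →
      ∀ v ∈ subdiff θ x, Metric.infDist x S ≤ κ' * ‖vb - v‖ :=
  quadratic_growth_implies_metric_subregularity_general θ hproper_bot hproper_top xb vb S hS hgrowth
end

section
/- Let S̄, X̄ be n×n symmetric PSD matrices with ⟨X̄, S̄⟩ = 0. Then the normal cone N_{S₊ⁿ}(S̄) is a polyhedral set if and only if rank(S̄) ≥ n − 1. -/
open Matrix

/-- A set is polyhedral if it is the intersection of finitely many half-spaces. -/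
def IsPolyhedral {E : Type*} [AddCommGroup E] [Module ℝ E] (s : Set E) : Prop :=
  ∃ (k : ℕ) (f : Fin k → (E →ₗ[ℝ] ℝ)) (b : Fin k → ℝ),
    s = {x | ∀ i, f i x ≤ b i}

/-!
A matrix `H` is normal to the PSD cone at `S̄` iff `H` is symmetric, `-H ⪰ 0` and `S̄ H = 0`:
the test matrices `S̄ + x xᵀ`, `2 S̄` and `0` give these, and `tr (A B) = 0` forces `A B = 0` for
PSD `A`, `B`.

If `ker S̄` is spanned by one vector `v`, such an `H` is a multiple of `v vᵀ`, so the cone is cut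
out by linear equations and the single inequality `vᵀ H v ≤ 0`.

If `ker S̄` contains orthogonal `p, q ≠ 0`, then for `u = p + t q` and `w ⊥ u` in `span {p, q}`
the ray through `-u uᵀ` lies in the cone while `-s u uᵀ + w wᵀ` never does. A polyhedral cone
must then have, for each `t`, a defining functional vanishing at `u uᵀ` and positive at `w wᵀ`.
One functional serves infinitely many `t`; being quadratic in `t` along `u uᵀ`, it vanishes on
every `w wᵀ` with `w ∈ span {p, q}`, a contradiction.
-/

open Filter

section Polyhedral

variable {E : Type*} [AddCommGroup E] [Module ℝ E]

theorem isPolyhedral_of_fintype {ι : Type*} [Fintype ι] (f : ι → E →ₗ[ℝ] ℝ) (b : ι → ℝ) :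
    IsPolyhedral {x | ∀ i, f i x ≤ b i} := by
  let e := Fintype.equivFin ι
  exact ⟨_, f ∘ e.symm, b ∘ e.symm, Set.ext fun x => e.symm.forall_congr_right.symm⟩

theorem IsPolyhedral.inter {s t : Set E} (hs : IsPolyhedral s) (ht : IsPolyhedral t) :
    IsPolyhedral (s ∩ t) := by
  obtain ⟨k, f, b, rfl⟩ := hs
  obtain ⟨l, g, c, rfl⟩ := ht
  convert isPolyhedral_of_fintype (Sum.elim f g) (Sum.elim b c) using 1
  ext x
  simp [Sum.forall]

theorem isPolyhedral_setOf_le (f : E →ₗ[ℝ] ℝ) (b : ℝ) : IsPolyhedral {x | f x ≤ b} := by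
  simpa using isPolyhedral_of_fintype (fun _ : Unit => f) (fun _ => b)

theorem isPolyhedral_ker {F : Type*} [AddCommGroup F] [Module ℝ F] [FiniteDimensional ℝ F]
    (L : E →ₗ[ℝ] F) : IsPolyhedral (LinearMap.ker L : Set E) := by
  let b := Module.finBasis ℝ F
  convert isPolyhedral_of_fintype
    (Sum.elim (fun i => b.coord i ∘ₗ L) (fun i => -(b.coord i ∘ₗ L))) (fun _ => 0) using 1
  ext x
  simp [Sum.forall, ← b.forall_coord_eq_zero_iff, le_antisymm_iff, forall_and]

theorem IsPolyhedral.exists_finite_face_functionals {C : Set E} (hC : IsPolyhedral C) :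
    ∃ (k : ℕ) (f : Fin k → E →ₗ[ℝ] ℝ), ∀ x y : E, (∀ s : ℝ, 0 ≤ s → s • x ∈ C) →
      (∀ s : ℝ, 0 ≤ s → s • x + y ∉ C) → ∃ i, f i x = 0 ∧ 0 < f i y := by
  obtain ⟨k, f, b, rfl⟩ := hC
  refine ⟨k, f, fun x y hray hout => ?_⟩
  have hb : ∀ i, 0 ≤ b i := by simpa using hray 0 le_rfl
  have hfx : ∀ i, f i x ≤ 0 := by
    intro i
    by_contra! hpos
    obtain ⟨s, hs, hs0⟩ := ((tendsto_id.atTop_mul_const hpos |>.eventually_gt_atTop (b i)).and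
      (eventually_ge_atTop 0)).exists
    simpa using (hray s hs0 i).trans_lt hs
  by_contra! hy
  have hlarge : ∀ i, ∀ᶠ s : ℝ in atTop, s * f i x + f i y ≤ b i := by
    intro i
    rcases (hfx i).lt_or_eq with hneg | hzero
    · exact (tendsto_atBot_add_const_right _ _
        (tendsto_id.atTop_mul_const_of_neg hneg)).eventually_le_atBot (b i)
    · simp [hzero, (hy i hzero).trans (hb i)]
  obtain ⟨s, hs, hs0⟩ := ((eventually_all.2 hlarge).and (eventually_ge_atTop 0)).exists
  exact hout s hs0 fun i => by simpa using hs i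

theorem not_isPolyhedral_of_rays {C : Set E} (x y : ℕ → E)
    (hray : ∀ t, ∀ s : ℝ, 0 ≤ s → s • x t ∈ C) (hout : ∀ t, ∀ s : ℝ, 0 ≤ s → s • x t + y t ∉ C)
    (hrigid : ∀ g : E →ₗ[ℝ] ℝ, {t | g (x t) = 0}.Infinite → ∀ t, g (y t) = 0) :
    ¬ IsPolyhedral C := by
  intro hC
  obtain ⟨k, f, hf⟩ := hC.exists_finite_face_functionals
  choose φ hφx hφy using fun t => hf (x t) (y t) (hray t) (hout t)
  obtain ⟨i, hi⟩ := Finite.exists_infinite_fiber φ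
  have hfiber : (φ ⁻¹' {i}).Infinite := Set.infinite_coe_iff.mp hi
  obtain ⟨t, rfl⟩ := hfiber.nonempty
  have hzero : {t' | f (φ t) (x t') = 0}.Infinite :=
    hfiber.mono fun t' (ht' : φ t' = φ t) => ht' ▸ hφx t'
  exact (hφy t).ne' (hrigid _ hzero t)

end Polyhedral

section PosSemidef

open scoped ComplexOrder MatrixOrder

variable {ι 𝕜 : Type*} [Fintype ι] [RCLike 𝕜] {A B : Matrix ι ι 𝕜}

theorem Matrix.PosSemidef.exists_eq_conjTranspose_mul_self (hA : A.PosSemidef) :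
    ∃ C : Matrix ι ι 𝕜, A = Cᴴ * C := by
  classical
  exact CStarAlgebra.nonneg_iff_eq_star_mul_self.mp hA.nonneg

theorem Matrix.PosSemidef.trace_mul_nonneg (hA : A.PosSemidef) (hB : B.PosSemidef) :
    0 ≤ trace (A * B) := by
  obtain ⟨D, rfl⟩ := hB.exists_eq_conjTranspose_mul_self
  rw [← mul_assoc, trace_mul_comm]
  simpa only [mul_assoc] using (hA.mul_mul_conjTranspose_same D).trace_nonneg

theorem Matrix.PosSemidef.mul_eq_zero_of_trace_mul_eq_zero (hA : A.PosSemidef)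
    (hB : B.PosSemidef) (h : trace (A * B) = 0) : A * B = 0 := by
  obtain ⟨C, rfl⟩ := hA.exists_eq_conjTranspose_mul_self
  obtain ⟨D, rfl⟩ := hB.exists_eq_conjTranspose_mul_self
  have hCD : trace ((C * Dᴴ)ᴴ * (C * Dᴴ)) = 0 := by
    rw [conjTranspose_mul, conjTranspose_conjTranspose, mul_assoc, trace_mul_comm, ← h]
    simp only [mul_assoc]
  rw [trace_conjTranspose_mul_self_eq_zero_iff] at hCD
  rw [conjTranspose_mul_self_mul_eq_zero, ← mul_assoc, hCD, zero_mul]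

end PosSemidef

section NormalCone

variable {ι : Type*} [Fintype ι]

def psdNormalCone (Sb : Matrix ι ι ℝ) : Set (Matrix ι ι ℝ) :=
  {H | Hᵀ = H ∧ ∀ S : Matrix ι ι ℝ, S.PosSemidef → trace (Hᵀ * (S - Sb)) ≤ 0}

theorem Matrix.posSemidef_vecMulVec_self (u : ι → ℝ) : (vecMulVec u u).PosSemidef := by
  simpa using posSemidef_vecMulVec_self_star u

variable {Sb H : Matrix ι ι ℝ}

theorem mem_psdNormalCone_iff (hS : Sb.PosSemidef) :
    H ∈ psdNormalCone Sb ↔ Hᵀ = H ∧ (-H).PosSemidef ∧ Sb * H = 0 := by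
  constructor
  · rintro ⟨hsym, hall⟩
    rw [hsym] at hall
    have hneg : (-H).PosSemidef := by
      refine .of_dotProduct_mulVec_nonneg (by simp [IsHermitian, hsym]) fun x => ?_
      have hx := hall (Sb + vecMulVec x x) (hS.add (posSemidef_vecMulVec_self x))
      rw [add_sub_cancel_left, trace_mul_comm, vecMulVec_mul, trace_vecMulVec] at hx
      simpa [neg_mulVec, dotProduct_mulVec, dotProduct_comm] using hx
    have hle : trace (H * Sb) ≤ 0 := by simpa using hall (Sb + Sb) (hS.add hS)
    have hge : 0 ≤ trace (H * Sb) := by simpa using hall 0 .zero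
    have htr : trace (Sb * -H) = 0 := by
      rw [mul_neg, trace_neg, trace_mul_comm, le_antisymm hle hge, neg_zero]
    refine ⟨hsym, hneg, ?_⟩
    simpa using hS.mul_eq_zero_of_trace_mul_eq_zero hneg htr
  · rintro ⟨hsym, hneg, hmul⟩
    refine ⟨hsym, fun S hS' => ?_⟩
    have h := hneg.trace_mul_nonneg hS'
    rw [hsym, mul_sub, trace_sub, trace_mul_comm H Sb, hmul]
    simpa using h

theorem psdNormalCone_eq_of_ker_le_span (hS : Sb.PosSemidef) {v : ι → ℝ}
    (hv : LinearMap.ker Sb.mulVecLin ≤ ℝ ∙ v) :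
    psdNormalCone Sb = {H | Hᵀ = H ∧ Sb * H = 0 ∧ v ⬝ᵥ H *ᵥ v ≤ 0} := by
  ext H
  rw [mem_psdNormalCone_iff hS]
  constructor
  · rintro ⟨hsym, hneg, hmul⟩
    simpa [hsym, hmul, neg_mulVec] using hneg.dotProduct_mulVec_nonneg v
  rintro ⟨hsym, hmul, hvv⟩
  refine ⟨hsym, .of_dotProduct_mulVec_nonneg (by simp [IsHermitian, hsym]) fun x => ?_, hmul⟩
  have hspan : ∀ y, ∃ c : ℝ, c • v = H *ᵥ y := fun y =>
    Submodule.mem_span_singleton.mp (hv (by simp [mulVec_mulVec, hmul]))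
  obtain ⟨c, hc⟩ := hspan x
  obtain ⟨d, hd⟩ := hspan v
  have hHsymm : x ⬝ᵥ H *ᵥ v = v ⬝ᵥ H *ᵥ x := by
    rw [dotProduct_mulVec, ← mulVec_transpose, hsym, dotProduct_comm]
  rw [← hc, ← hd] at hHsymm
  rw [← hd] at hvv
  simp only [dotProduct_smul, smul_eq_mul] at hHsymm hvv
  simp only [star_trivial, neg_mulVec, ← hc, dotProduct_neg, dotProduct_smul, smul_eq_mul,
    Left.nonneg_neg_iff]
  rcases eq_or_ne v 0 with rfl | hv0
  · simp
  have hvpos : 0 < v ⬝ᵥ v := by simpa using dotProduct_star_self_pos_iff.mpr hv0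
  have hd0 : d ≤ 0 := by nlinarith
  have key : c * (x ⬝ᵥ v) * (v ⬝ᵥ v) ≤ 0 := by
    rw [show c * (x ⬝ᵥ v) * (v ⬝ᵥ v) = d * (x ⬝ᵥ v) ^ 2 by linear_combination -(x ⬝ᵥ v) * hHsymm]
    exact mul_nonpos_of_nonpos_of_nonneg hd0 (sq_nonneg _)
  exact nonpos_of_mul_nonpos_left key hvpos

theorem isPolyhedral_psdNormalCone_of_ker_le_span (hS : Sb.PosSemidef) {v : ι → ℝ}
    (hv : LinearMap.ker Sb.mulVecLin ≤ ℝ ∙ v) : IsPolyhedral (psdNormalCone Sb) := by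
  let skew : Matrix ι ι ℝ →ₗ[ℝ] Matrix ι ι ℝ :=
    (transposeLinearEquiv ι ι ℝ ℝ).toLinearMap - LinearMap.id
  let quad : Matrix ι ι ℝ →ₗ[ℝ] ℝ := dotProductBilin ℝ ℝ v ∘ₗ (mulVecBilin ℝ ℝ).flip v
  convert ((isPolyhedral_ker skew).inter (isPolyhedral_ker (LinearMap.mulLeft ℝ Sb))).inter
    (isPolyhedral_setOf_le quad 0) using 1
  ext H
  simp [psdNormalCone_eq_of_ker_le_span hS hv, skew, quad, sub_eq_zero, and_assoc]

end NormalCone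

open Polynomial in
theorem eq_zero_of_infinite_setOf_quadratic_eq_zero {a b c : ℝ}
    (h : {t : ℕ | a + b * t + c * t ^ 2 = 0}.Infinite) : a = 0 ∧ b = 0 ∧ c = 0 := by
  have hp : (C a + C b * X + C c * X ^ 2 : ℝ[X]) = 0 := by
    refine eq_zero_of_infinite_isRoot _ ((h.image Nat.cast_injective.injOn).mono ?_)
    rintro _ ⟨t, ht, rfl⟩
    simpa using ht
  exact ⟨by simpa using congr(coeff $hp 0), by simpa using congr(coeff $hp 1),
    by simpa using congr(coeff $hp 2)⟩

theorem map_vecMulVec_self_eq_zero_of_infinite {ι : Type*} (g : Matrix ι ι ℝ →ₗ[ℝ] ℝ)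
    {p q : ι → ℝ}
    (h : {t : ℕ | g (vecMulVec (p + (t : ℝ) • q) (p + (t : ℝ) • q)) = 0}.Infinite) (a b : ℝ) :
    g (vecMulVec (a • p + b • q) (a • p + b • q)) = 0 := by
  have expand : ∀ a b : ℝ, g (vecMulVec (a • p + b • q) (a • p + b • q)) =
      a ^ 2 * g (vecMulVec p p) + a * b * g (vecMulVec p q + vecMulVec q p) +
        b ^ 2 * g (vecMulVec q q) := by
    intro a b
    simp only [vecMulVec_add, add_vecMulVec, smul_vecMulVec, vecMulVec_smul, map_add, map_smul,
      smul_eq_mul]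
    ring
  obtain ⟨h0, h1, h2⟩ := eq_zero_of_infinite_setOf_quadratic_eq_zero (a := g (vecMulVec p p))
    (b := g (vecMulVec p q + vecMulVec q p)) (c := g (vecMulVec q q)) <| h.mono fun t ht => by
      rw [Set.mem_ofPred_eq, ← one_smul ℝ p, expand] at ht
      exact Eq.trans (by ring) ht
  rw [expand, h0, h1, h2]
  ring

theorem Submodule.exists_orthogonal_pair {ι : Type*} [Fintype ι] (K : Submodule ℝ (ι → ℝ))
    (hK : 1 < Module.finrank ℝ K) : ∃ p ∈ K, ∃ q ∈ K, p ≠ 0 ∧ q ≠ 0 ∧ p ⬝ᵥ q = 0 := by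
  have hnot : ∀ p, ∃ r ∈ K, r ∉ ℝ ∙ p := fun p => SetLike.not_le_iff_exists.mp fun hle =>
    hK.not_ge <| (Submodule.finrank_mono hle).trans <| by simpa using finrank_span_le_card {p}
  obtain ⟨p, hp, hp0⟩ := hnot 0
  obtain ⟨r, hr, hrp⟩ := hnot p
  rw [Submodule.span_zero_singleton, Submodule.mem_bot] at hp0
  have hpp : p ⬝ᵥ p ≠ 0 := by simpa using hp0
  refine ⟨p, hp, r - (p ⬝ᵥ r / p ⬝ᵥ p) • p, K.sub_mem hr (K.smul_mem _ hp), hp0, ?_, ?_⟩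
  · rw [sub_ne_zero]
    exact fun h => hrp (h ▸ Submodule.smul_mem _ _ (Submodule.mem_span_singleton_self p))
  · rw [dotProduct_sub, dotProduct_smul, smul_eq_mul, div_mul_cancel₀ _ hpp, sub_self]

section NotPolyhedral

variable {ι : Type*} [Fintype ι] {Sb : Matrix ι ι ℝ}

theorem not_isPolyhedral_psdNormalCone (hS : Sb.PosSemidef)
    (hK : 1 < Module.finrank ℝ (LinearMap.ker Sb.mulVecLin)) :
    ¬ IsPolyhedral (psdNormalCone Sb) := by
  obtain ⟨p, hp, q, hq, hp0, hq0, hpq⟩ := Submodule.exists_orthogonal_pair _ hK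
  have hqp : q ⬝ᵥ p = 0 := by rwa [dotProduct_comm]
  have hα : 0 < p ⬝ᵥ p := by simpa using dotProduct_star_self_pos_iff.mpr hp0
  have hβ : 0 < q ⬝ᵥ q := by simpa using dotProduct_star_self_pos_iff.mpr hq0
  let u : ℕ → ι → ℝ := fun t => p + (t : ℝ) • q
  let w : ℕ → ι → ℝ := fun t => ((t : ℝ) * q ⬝ᵥ q) • p + (-(p ⬝ᵥ p)) • q
  have hu : ∀ t, Sb *ᵥ u t = 0 := fun t =>
    (LinearMap.ker Sb.mulVecLin).add_mem hp ((LinearMap.ker Sb.mulVecLin).smul_mem _ hq)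
  have huw : ∀ t, u t ⬝ᵥ w t = 0 := fun t => by
    simp only [u, w, add_dotProduct, dotProduct_add, smul_dotProduct, dotProduct_smul, hpq, hqp,
      smul_eq_mul]
    ring
  have hww : ∀ t, 0 < w t ⬝ᵥ w t := fun t => by
    have : w t ⬝ᵥ w t = ((t : ℝ) * q ⬝ᵥ q) ^ 2 * p ⬝ᵥ p + (p ⬝ᵥ p) ^ 2 * q ⬝ᵥ q := by
      simp only [w, add_dotProduct, dotProduct_add, smul_dotProduct, dotProduct_smul, hpq, hqp,
        smul_eq_mul]
      ring
    rw [this]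
    positivity
  refine not_isPolyhedral_of_rays (fun t => -vecMulVec (u t) (u t))
    (fun t => vecMulVec (w t) (w t)) (fun t s hs => ?_) (fun t s hs hmem => ?_) fun g hg t => ?_
  · rw [mem_psdNormalCone_iff hS]
    refine ⟨by simp, by simpa using (posSemidef_vecMulVec_self (u t)).smul hs, ?_⟩
    simp [mul_vecMulVec, hu]
  · obtain ⟨-, hneg, -⟩ := (mem_psdNormalCone_iff hS).1 hmem
    have := hneg.dotProduct_mulVec_nonneg (w t)
    simp [add_mulVec, neg_mulVec, smul_mulVec, vecMulVec_mulVec, huw] at this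
    exact (mul_pos (hww t) (hww t)).not_ge this
  · simpa [w] using
      map_vecMulVec_self_eq_zero_of_infinite g (by simpa using hg) ((t : ℝ) * q ⬝ᵥ q) (-(p ⬝ᵥ p))

end NotPolyhedral

theorem Matrix.rank_add_finrank_ker_mulVecLin {m n K : Type*} [Fintype n] [Field K]
    (A : Matrix m n K) :
    A.rank + Module.finrank K (LinearMap.ker A.mulVecLin) = Fintype.card n := by
  rw [Matrix.rank, LinearMap.finrank_range_add_finrank_ker, Module.finrank_fintype_fun_eq_card]

theorem normalCone_polyhedral_iff_rank_ge_general
    (n : ℕ) (Sb : Matrix (Fin n) (Fin n) ℝ)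
    (hS : Sb.PosSemidef)
    (N : Set (Matrix (Fin n) (Fin n) ℝ))
    (hN : N = {H | Hᵀ = H ∧ ∀ S : Matrix (Fin n) (Fin n) ℝ, S.PosSemidef →
      Matrix.trace (Hᵀ * (S - Sb)) ≤ 0}) :
    IsPolyhedral N ↔ n - 1 ≤ Sb.rank := by
  obtain rfl : N = psdNormalCone Sb := hN
  have hrank := Sb.rank_add_finrank_ker_mulVecLin
  rw [Fintype.card_fin] at hrank
  constructor
  · intro hpoly
    by_contra! hlt
    exact not_isPolyhedral_psdNormalCone hS (by omega) hpoly
  · intro hle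
    obtain ⟨v, hv⟩ := (LinearMap.ker Sb.mulVecLin).finrank_le_one_iff_isPrincipal.1 (by omega)
    exact isPolyhedral_psdNormalCone_of_ker_le_span hS hv.le

/-- For symmetric PSD matrices `X̄, S̄` with `⟨X̄, S̄⟩ = 0`, the normal cone
`N_{S₊ⁿ}(S̄)` is a polyhedral set if and only if `rank S̄ ≥ n − 1`. -/
theorem normalCone_polyhedral_iff_rank_ge
    (n : ℕ) (Xb Sb : Matrix (Fin n) (Fin n) ℝ)
    (hX : Xb.PosSemidef) (hS : Sb.PosSemidef)
    (hcomp : Matrix.trace (Xb * Sb) = 0)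
    (N : Set (Matrix (Fin n) (Fin n) ℝ))
    (hN : N = {H | Hᵀ = H ∧ ∀ S : Matrix (Fin n) (Fin n) ℝ, S.PosSemidef →
      Matrix.trace (Hᵀ * (S - Sb)) ≤ 0}) :
    IsPolyhedral N ↔ n - 1 ≤ Sb.rank :=
  normalCone_polyhedral_iff_rank_ge_general n Sb hS N hN
end

section
/- If F : X ⇉ Y is a set-valued polyhedral mapping (its graph is a finite union of polyhedral convex sets) and (x̄, ȳ) ∈ gph(F), then F is locally upper Lipschitz at x̄: there exist κ > 0 and ε > 0 such that F(x) ⊆ F(x̄) + κ‖x − x̄‖ B for all x with ‖x − x̄‖ ≤ ε, where B is the closed unit ball in Y. -/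
/-!
Write a polyhedral piece `C` of the graph as `{(x, y) | g j x + ⟪u j, y⟫ ≤ b j}`. By Hoffman's
error bound for the systems `⟪u j, y⟫ ≤ b j - g j x'`, whose right-hand sides move by `O(‖x - x'‖)`,
every point of the section `C(x)` lies within `c‖x - x'‖` of `C(x')` as soon as `C(x')` is
nonempty. Such a closed set has a closed domain (Bolzano–Weierstrass), so near `x̄` only pieces
whose domain contains `x̄` matter, and a finite union of locally upper Lipschitz maps is locally
upper Lipschitz.

Hoffman's bound: if `y'` is the nearest point to `y` of the polyhedron, `y - y'` lies in the normal
cone at `y'`, which is the cone of the active normals by Farkas' lemma (finitely generated cones are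
closed by conic Carathéodory). By Carathéodory again `y - y'` is a nonnegative combination of a
linearly independent family `u j`, `j ∈ t`; pairing with `a` such that `⟪a, u j⟫ = 1` on `t` gives
`‖y - y'‖² ≤ r ⟪a, y - y'⟫` for the violation `r`, and there are finitely many `t`.
-/

open Filter Topology
open scoped RealInnerProductSpace

section ConicCombination

variable {E ι : Type*} [AddCommGroup E] [Module ℝ E] {u : ι → E}

theorem PointedCone.mem_hull_image_finset_iff {s : Finset ι} {v : E} :
    v ∈ PointedCone.hull ℝ (u '' s) ↔
      ∃ c : ι → ℝ, (∀ j ∈ s, 0 ≤ c j) ∧ ∑ j ∈ s, c j • u j = v := by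
  classical
  rw [Fintype.mem_span_image_iff_exists_fun]
  constructor
  · rintro ⟨c, rfl⟩
    refine ⟨fun j => if h : j ∈ s then c ⟨j, h⟩ else 0, fun j hj => by simp [hj, (c _).2], ?_⟩
    rw [← Finset.sum_coe_sort s]
    exact Finset.sum_congr rfl fun j _ => by simp
  · rintro ⟨c, hc, rfl⟩
    refine ⟨fun j => ⟨c j, hc j j.2⟩, ?_⟩
    rw [← Finset.sum_coe_sort s]
    rfl

theorem PointedCone.exists_mem_hull_image_erase [DecidableEq ι] {s : Finset ι} {v : E}
    (hv : v ∈ PointedCone.hull ℝ (u '' s)) (hs : ¬ LinearIndepOn ℝ u s) :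
    ∃ i ∈ s, v ∈ PointedCone.hull ℝ (u '' (s.erase i)) := by
  obtain ⟨c, hc, rfl⟩ := PointedCone.mem_hull_image_finset_iff.mp hv
  obtain ⟨g, hg, hpos⟩ : ∃ g : ι → ℝ, ∑ j ∈ s, g j • u j = 0 ∧ ∃ j ∈ s, 0 < g j := by
    obtain ⟨g, hg, j, hj, hgj⟩ := not_linearIndepOn_finset_iff.mp hs
    rcases hgj.lt_or_gt with hneg | hpos
    · exact ⟨-g, by simp [neg_smul, hg], j, hj, by simpa using hneg⟩
    · exact ⟨g, hg, j, hj, hpos⟩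
  obtain ⟨i, hi, hmin⟩ := Finset.exists_min_image (s.filter fun j => 0 < g j)
    (fun j => c j / g j) (by simpa [Finset.Nonempty] using hpos)
  rw [Finset.mem_filter] at hi
  set r := c i / g i
  refine ⟨i, hi.1, PointedCone.mem_hull_image_finset_iff.mpr ⟨fun j => c j - r * g j, ?_, ?_⟩⟩
  · intro j hj
    have hjs := Finset.mem_of_mem_erase hj
    by_cases hgj : 0 < g j
    · have := hmin j (Finset.mem_filter.mpr ⟨hjs, hgj⟩)
      rw [div_le_div_iff₀ hi.2 hgj] at this
      simp only [r, sub_nonneg, div_mul_eq_mul_div, div_le_iff₀ hi.2]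
      linarith
    · have : 0 ≤ r := div_nonneg (hc i hi.1) hi.2.le
      nlinarith [hc j hjs]
  · have hri : c i - r * g i = 0 := by simp [r, div_mul_cancel₀ _ hi.2.ne']
    rw [Finset.sum_erase _ (by simp [hri])]
    simp only [sub_smul, Finset.sum_sub_distrib, mul_smul, ← Finset.smul_sum, hg, smul_zero,
      sub_zero]

theorem PointedCone.exists_linearIndepOn_of_mem_hull_image {s : Finset ι} {v : E}
    (hv : v ∈ PointedCone.hull ℝ (u '' s)) :
    ∃ t ⊆ s, LinearIndepOn ℝ u t ∧ v ∈ PointedCone.hull ℝ (u '' t) := by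
  classical
  induction s using Finset.strongInduction with
  | H s ih =>
    by_cases hs : LinearIndepOn ℝ u s
    · exact ⟨s, subset_rfl, hs, hv⟩
    · obtain ⟨i, hi, hvi⟩ := PointedCone.exists_mem_hull_image_erase hv hs
      obtain ⟨t, hts, ht, hvt⟩ := ih _ (Finset.erase_ssubset hi) hvi
      exact ⟨t, hts.trans (Finset.erase_subset i s), ht, hvt⟩

end ConicCombination

section ClosedCone

variable {E ι : Type*} [NormedAddCommGroup E] [NormedSpace ℝ E] {u : ι → E}

theorem PointedCone.isClosed_hull_image_of_linearIndepOn {s : Finset ι}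
    (hs : LinearIndepOn ℝ u s) : IsClosed (PointedCone.hull ℝ (u '' s) : Set E) := by
  set L := Fintype.linearCombination ℝ (fun j : s => u j)
  have hL : Topology.IsClosedEmbedding L := LinearMap.isClosedEmbedding_of_injective
    (LinearMap.ker_eq_bot.mpr hs.linearIndependent.fintypeLinearCombination_injective)
  have himage : (PointedCone.hull ℝ (u '' s) : Set E) = L '' Set.Ici 0 := by
    ext v
    simp only [SetLike.mem_coe, Fintype.mem_span_image_iff_exists_fun, Set.mem_image,
      Set.mem_Ici, L, Fintype.linearCombination_apply]
    constructor
    · rintro ⟨c, rfl⟩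
      exact ⟨fun j => c j, fun j => (c j).2, rfl⟩
    · rintro ⟨c, hc, rfl⟩
      exact ⟨fun j => ⟨c j, hc j⟩, rfl⟩
  rw [himage]
  exact hL.isClosedMap _ isClosed_Ici

theorem PointedCone.isClosed_hull_image (s : Finset ι) :
    IsClosed (PointedCone.hull ℝ (u '' s) : Set E) := by
  classical
  have hunion : (PointedCone.hull ℝ (u '' s) : Set E) =
      ⋃ (t : Finset ι) (_ : t ∈ s.powerset.filter fun t : Finset ι => LinearIndepOn ℝ u t),
        (PointedCone.hull ℝ (u '' t) : Set E) := by
    ext v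
    simp only [SetLike.mem_coe, Set.mem_iUnion, Finset.mem_filter, Finset.mem_powerset,
      exists_prop]
    constructor
    · intro hv
      obtain ⟨t, hts, ht, hvt⟩ := PointedCone.exists_linearIndepOn_of_mem_hull_image hv
      exact ⟨t, ⟨hts, ht⟩, hvt⟩
    · rintro ⟨t, ⟨hts, -⟩, hvt⟩
      exact Submodule.span_mono (Set.image_mono (Finset.coe_subset.mpr hts)) hvt
  rw [hunion]
  exact isClosed_biUnion_finset fun t ht =>
    PointedCone.isClosed_hull_image_of_linearIndepOn (Finset.mem_filter.mp ht).2

end ClosedCone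

section Hoffman

variable {Y ι : Type*} [NormedAddCommGroup Y] [InnerProductSpace ℝ Y] {u : ι → Y}

theorem inner_nonneg_of_mem_hull {S : Set Y} {v d : Y} (hv : v ∈ PointedCone.hull ℝ S)
    (hd : ∀ w ∈ S, 0 ≤ ⟪w, d⟫) : 0 ≤ ⟪v, d⟫ := by
  have : d ∈ PointedCone.dual (innerₗ Y) (PointedCone.hull ℝ S : Set Y) := by
    rw [PointedCone.dual_hull]
    exact fun w hw => hd w hw
  exact this hv

theorem eventually_forall_inner_add_smul_le [Finite ι] {b : ι → ℝ} {z d : Y}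
    (hz : ∀ j, ⟪u j, z⟫ ≤ b j) (hd : ∀ j, ⟪u j, z⟫ = b j → ⟪u j, d⟫ ≤ 0) :
    ∀ᶠ t in 𝓝[>] (0 : ℝ), ∀ j, ⟪u j, z + t • d⟫ ≤ b j := by
  refine eventually_all.mpr fun j => ?_
  simp only [inner_add_right, inner_smul_right]
  rcases (hz j).eq_or_lt with hj | hj
  · filter_upwards [self_mem_nhdsWithin] with t (ht : 0 < t)
    nlinarith [hd j hj]
  · have hcont : Tendsto (fun t : ℝ => ⟪u j, z⟫ + t * ⟪u j, d⟫) (𝓝[>] 0) (𝓝 ⟪u j, z⟫) := by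
      refine tendsto_nhdsWithin_of_tendsto_nhds ?_
      simpa using (tendsto_id (x := 𝓝 (0 : ℝ))).mul_const ⟪u j, d⟫ |>.const_add ⟪u j, z⟫
    exact (hcont.eventually (gt_mem_nhds hj)).mono fun t ht => ht.le

theorem norm_le_mul_of_mem_hull_image {s : Set ι} {a v : Y} {r : ℝ} (hr : 0 ≤ r)
    (hv : v ∈ PointedCone.hull ℝ (u '' s)) (ha : ∀ j ∈ s, ⟪a, u j⟫ = 1)
    (hvu : ∀ j ∈ s, ⟪u j, v⟫ ≤ r) : ‖v‖ ≤ ‖a‖ * r := by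
  have hva : 0 ≤ ⟪v, r • a - v⟫ := inner_nonneg_of_mem_hull hv <| by
    rintro _ ⟨j, hj, rfl⟩
    rw [inner_sub_right, inner_smul_right, real_inner_comm, ha j hj]
    linarith [hvu j hj]
  rw [inner_sub_right, inner_smul_right, real_inner_self_eq_norm_mul_norm] at hva
  have hcs : ⟪v, a⟫ ≤ ‖v‖ * ‖a‖ := real_inner_le_norm v a
  rcases (norm_nonneg v).eq_or_lt with hv0 | hv0
  · rw [← hv0]; positivity
  · nlinarith [mul_le_mul_of_nonneg_left hcs hr]

variable [FiniteDimensional ℝ Y]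

theorem exists_inner_eq_one_of_linearIndepOn {s : Set ι} (hs : LinearIndepOn ℝ u s) :
    ∃ a : Y, ∀ j ∈ s, ⟪a, u j⟫ = 1 := by
  obtain ⟨f, hf⟩ := Module.exists_dual_forall_apply_eq_one hs
  exact ⟨(InnerProductSpace.toDual ℝ Y).symm (LinearMap.toContinuousLinearMap f),
    fun j hj => by rw [InnerProductSpace.toDual_symm_apply]; exact hf j hj⟩

/-- The normal cone of a polyhedron at `z` is generated by the active normals (Farkas). -/
theorem mem_hull_active_of_forall_inner_sub_nonpos [Fintype ι] {b : ι → ℝ} {z v : Y}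
    (hz : ∀ j, ⟪u j, z⟫ ≤ b j) (hv : ∀ w, (∀ j, ⟪u j, w⟫ ≤ b j) → ⟪v, w - z⟫ ≤ 0) :
    v ∈ PointedCone.hull ℝ (u '' ({j | ⟪u j, z⟫ = b j} : Finset ι)) := by
  set J : Finset ι := {j | ⟪u j, z⟫ = b j}
  let C : ProperCone ℝ Y := ⟨PointedCone.hull ℝ (u '' J), PointedCone.isClosed_hull_image J⟩
  by_contra hvC
  obtain ⟨d, hdC, hvd⟩ := ProperCone.hyperplane_separation' C hvC
  have hactive : ∀ j, ⟪u j, z⟫ = b j → ⟪u j, -d⟫ ≤ 0 := fun j hj => by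
    rw [inner_neg_right, neg_nonpos]
    exact hdC _ (PointedCone.subset_hull ⟨j, by simpa [J] using hj, rfl⟩)
  obtain ⟨t, ht, ht0⟩ := ((eventually_forall_inner_add_smul_le hz hactive).and
    self_mem_nhdsWithin).exists
  have := hv _ ht
  rw [add_sub_cancel_left, inner_smul_right, inner_neg_right] at this
  nlinarith [show (0 : ℝ) < t from ht0]

theorem exists_hoffman_constant [Fintype ι] (u : ι → Y) :
    ∃ c, ∀ (b : ι → ℝ) (y z : Y) (r : ℝ), 0 ≤ r → (∀ j, ⟪u j, z⟫ ≤ b j) →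
      (∀ j, ⟪u j, y⟫ ≤ b j + r) → ∃ y', (∀ j, ⟪u j, y'⟫ ≤ b j) ∧ ‖y - y'‖ ≤ c * r := by
  classical
  have hdual : ∀ t : Finset ι, ∃ a : Y, LinearIndepOn ℝ u t → ∀ j ∈ t, ⟪a, u j⟫ = 1 := fun t => by
    by_cases ht : LinearIndepOn ℝ u t
    · obtain ⟨a, ha⟩ := exists_inner_eq_one_of_linearIndepOn ht
      exact ⟨a, fun _ => ha⟩
    · exact ⟨0, fun h => absurd h ht⟩
  choose a ha using hdual
  obtain ⟨c, hc⟩ := Finite.exists_le fun t => ‖a t‖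
  refine ⟨c, fun b y z r hr hz hy => ?_⟩
  set P : Set Y := {w | ∀ j, ⟪u j, w⟫ ≤ b j}
  have hPclosed : IsClosed P := by
    simp only [P, Set.ofPred_forall]
    exact isClosed_iInter fun j => isClosed_le (continuous_const.inner continuous_id)
      continuous_const
  have hPconvex : Convex ℝ P := by
    simp only [P, Set.ofPred_forall]
    exact convex_iInter fun j => convex_halfSpace_le (innerₗ Y (u j)).isLinear _
  obtain ⟨y', hy'P, hy'⟩ :=
    exists_norm_eq_iInf_of_complete_convex (K := P) ⟨z, hz⟩ hPclosed.isComplete hPconvex y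
  have hnormal := mem_hull_active_of_forall_inner_sub_nonpos hy'P
    ((norm_eq_iInf_iff_real_inner_le_zero hPconvex hy'P).mp hy')
  obtain ⟨t, htJ, ht, hvt⟩ := PointedCone.exists_linearIndepOn_of_mem_hull_image hnormal
  refine ⟨y', hy'P, ?_⟩
  refine (norm_le_mul_of_mem_hull_image hr hvt (ha t ht) fun j hj => ?_).trans
    (mul_le_mul_of_nonneg_right (hc t) hr)
  have hj : ⟪u j, y'⟫ = b j := by simpa using htJ hj
  rw [inner_sub_right, hj]
  linarith [hy j]

end Hoffman

def IsLocallyUpperLipschitzAt {X Y : Type*} [NormedAddCommGroup X] [NormedAddCommGroup Y]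
    (F : X → Set Y) (x₀ : X) : Prop :=
  ∃ κ : ℝ, ∀ᶠ x in 𝓝 x₀, ∀ y ∈ F x, ∃ y' ∈ F x₀, ‖y - y'‖ ≤ κ * ‖x - x₀‖

namespace IsLocallyUpperLipschitzAt

variable {X Y : Type*} [NormedAddCommGroup X] [NormedAddCommGroup Y] {x₀ : X}

theorem iUnion {ι : Type*} [Finite ι] {F : ι → X → Set Y}
    (hF : ∀ i, IsLocallyUpperLipschitzAt (F i) x₀) :
    IsLocallyUpperLipschitzAt (fun x => ⋃ i, F i x) x₀ := by
  choose κ hκ using hF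
  obtain ⟨K, hK⟩ := Finite.exists_le κ
  refine ⟨K, (eventually_all.mpr hκ).mono fun x hx y hy => ?_⟩
  obtain ⟨i, hi⟩ := Set.mem_iUnion.mp hy
  obtain ⟨y', hy', hyy'⟩ := hx i y hi
  exact ⟨y', Set.mem_iUnion.mpr ⟨i, hy'⟩,
    hyy'.trans (mul_le_mul_of_nonneg_right (hK i) (norm_nonneg _))⟩

theorem exists_pos {F : X → Set Y} (hF : IsLocallyUpperLipschitzAt F x₀) :
    ∃ κ > (0 : ℝ), ∃ ε > (0 : ℝ), ∀ x : X, ‖x - x₀‖ ≤ ε →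
      ∀ y ∈ F x, ∃ y' ∈ F x₀, ‖y - y'‖ ≤ κ * ‖x - x₀‖ := by
  obtain ⟨κ, hκ⟩ := hF
  obtain ⟨ε, hε, hball⟩ := Metric.eventually_nhds_iff.mp hκ
  refine ⟨max κ 1, by positivity, ε / 2, by positivity, fun x hx y hy => ?_⟩
  obtain ⟨y', hy', hyy'⟩ := hball (by rw [dist_eq_norm]; linarith) y hy
  exact ⟨y', hy', hyy'.trans (mul_le_mul_of_nonneg_right (le_max_left _ _) (norm_nonneg _))⟩

end IsLocallyUpperLipschitzAt

section Sections

variable {X Y : Type*} [NormedAddCommGroup X] [NormedAddCommGroup Y] {P : Set (X × Y)} {c : ℝ}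

def HasLipschitzSections (P : Set (X × Y)) (c : ℝ) : Prop :=
  ∀ ⦃x x' y y₀⦄, (x, y) ∈ P → (x', y₀) ∈ P → ∃ y', (x', y') ∈ P ∧ ‖y - y'‖ ≤ c * ‖x - x'‖

theorem HasLipschitzSections.isClosed_setOf_exists_mem [ProperSpace Y]
    (hc : HasLipschitzSections P c) (hP : IsClosed P) : IsClosed {x | ∃ y, (x, y) ∈ P} := by
  refine isClosed_of_closure_subset fun x₀ hx₀ => ?_
  obtain ⟨xs, hxs, hlim⟩ := mem_closure_iff_seq_limit.mp hx₀
  choose ys hys using hxs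
  choose zs hzs hzd using fun n => hc (hys 0) (hys n)
  obtain ⟨C, hC⟩ := (Metric.isBounded_range_of_tendsto xs hlim).exists_norm_le
  have hbounded : ∀ n, zs n ∈ Metric.closedBall (ys 0) (|c| * (C + C)) := fun n => by
    rw [Metric.mem_closedBall, dist_comm, dist_eq_norm]
    calc ‖ys 0 - zs n‖ ≤ c * ‖xs 0 - xs n‖ := hzd n
      _ ≤ |c| * ‖xs 0 - xs n‖ := mul_le_mul_of_nonneg_right (le_abs_self c) (norm_nonneg _)
      _ ≤ |c| * (C + C) := by
        gcongr
        exact (norm_sub_le _ _).trans (add_le_add (hC _ ⟨0, rfl⟩) (hC _ ⟨n, rfl⟩))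
  obtain ⟨y₀, -, φ, hφ, hzlim⟩ := tendsto_subseq_of_bounded Metric.isBounded_closedBall hbounded
  exact ⟨y₀, hP.mem_of_tendsto ((hlim.comp hφ.tendsto_atTop).prodMk_nhds hzlim)
    (Eventually.of_forall fun n => hzs (φ n))⟩

theorem HasLipschitzSections.isLocallyUpperLipschitzAt [ProperSpace Y]
    (hc : HasLipschitzSections P c) (hP : IsClosed P) (x₀ : X) :
    IsLocallyUpperLipschitzAt (fun x => {y | (x, y) ∈ P}) x₀ := by
  by_cases h : ∃ y₀, (x₀, y₀) ∈ P
  · obtain ⟨y₀, hy₀⟩ := h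
    exact ⟨c, Eventually.of_forall fun x y hy => hc hy hy₀⟩
  · have := (hc.isClosed_setOf_exists_mem hP).isOpen_compl.mem_nhds h
    exact ⟨0, mem_of_superset this fun x hx y hy => (hx ⟨y, hy⟩).elim⟩

end Sections

section Polyhedral

theorem IsPolyhedral.isClosed {E : Type*} [NormedAddCommGroup E] [NormedSpace ℝ E]
    [FiniteDimensional ℝ E] {s : Set E} (hs : IsPolyhedral s) : IsClosed s := by
  obtain ⟨k, f, b, rfl⟩ := hs
  simp only [Set.ofPred_forall]
  exact isClosed_iInter fun i => isClosed_le (f i).continuous_of_finiteDimensional continuous_const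

variable {X Y : Type*} [NormedAddCommGroup X] [NormedSpace ℝ X] [FiniteDimensional ℝ X]
  [NormedAddCommGroup Y] [InnerProductSpace ℝ Y] [FiniteDimensional ℝ Y] {P : Set (X × Y)}

theorem IsPolyhedral.exists_hasLipschitzSections (hP : IsPolyhedral P) :
    ∃ c, HasLipschitzSections P c := by
  obtain ⟨k, f, b, rfl⟩ := hP
  let g (i : Fin k) : X →L[ℝ] ℝ := ((f i).comp (LinearMap.inl ℝ X Y)).toContinuousLinearMap
  let u (i : Fin k) : Y := (InnerProductSpace.toDual ℝ Y).symm
    ((f i).comp (LinearMap.inr ℝ X Y)).toContinuousLinearMap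
  have hf (i : Fin k) (x : X) (y : Y) : f i (x, y) = g i x + ⟪u i, y⟫ := by
    have hxy : (x, y) = LinearMap.inl ℝ X Y x + LinearMap.inr ℝ X Y y := by simp
    rw [hxy, map_add, InnerProductSpace.toDual_symm_apply]
    rfl
  obtain ⟨c, hc⟩ := exists_hoffman_constant u
  set M := ∑ i, ‖g i‖
  refine ⟨c * M, fun x x' y y₀ hy hy₀ => ?_⟩
  have hg (i : Fin k) : g i x' - g i x ≤ M * ‖x - x'‖ := by
    calc g i x' - g i x = g i (x' - x) := (map_sub _ _ _).symm
      _ ≤ ‖g i‖ * ‖x' - x‖ := (le_abs_self _).trans ((g i).le_opNorm _)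
      _ ≤ M * ‖x - x'‖ := by
        rw [norm_sub_rev]
        gcongr
        exact Finset.single_le_sum (fun j _ => norm_nonneg (g j)) (Finset.mem_univ i)
  obtain ⟨y', hy', hyy'⟩ := hc (fun i => b i - g i x') y y₀ (M * ‖x - x'‖) (by positivity)
    (fun i => by linarith [hf i x' y₀, hy₀ i]) (fun i => by linarith [hf i x y, hy i, hg i])
  exact ⟨y', fun i => by linarith [hf i x' y', hy' i], by rwa [mul_assoc]⟩

theorem IsPolyhedral.isLocallyUpperLipschitzAt_sections (hP : IsPolyhedral P) (x₀ : X) :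
    IsLocallyUpperLipschitzAt (fun x => {y | (x, y) ∈ P}) x₀ :=
  have ⟨_, hc⟩ := hP.exists_hasLipschitzSections
  hc.isLocallyUpperLipschitzAt hP.isClosed x₀

end Polyhedral

theorem polyhedral_multifunction_locally_upper_lipschitz_general
    {X Y : Type*} [NormedAddCommGroup X] [InnerProductSpace ℝ X] [FiniteDimensional ℝ X]
    [NormedAddCommGroup Y] [InnerProductSpace ℝ Y] [FiniteDimensional ℝ Y]
    (F : X → Set Y)
    (hpoly : ∃ (k : ℕ) (C : Fin k → Set (X × Y)),
      (∀ i, IsPolyhedral (C i)) ∧ (∀ i, Convex ℝ (C i)) ∧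
      {p : X × Y | p.2 ∈ F p.1} = ⋃ i, C i)
    (xb : X) :
    ∃ κ > (0 : ℝ), ∃ ε > (0 : ℝ), ∀ x : X, ‖x - xb‖ ≤ ε →
      ∀ y ∈ F x, ∃ y' ∈ F xb, ‖y - y'‖ ≤ κ * ‖x - xb‖ := by
  obtain ⟨k, C, hC, -, hgraph⟩ := hpoly
  have hF : F = fun x => ⋃ i, {y | (x, y) ∈ C i} := by
    ext x y
    simpa using Set.ext_iff.mp hgraph (x, y)
  have hlip : IsLocallyUpperLipschitzAt F xb := by
    rw [hF]
    exact .iUnion fun i => (hC i).isLocallyUpperLipschitzAt_sections xb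
  exact hlip.exists_pos

/-- Robinson's theorem: a set-valued polyhedral mapping (one whose graph is a finite
union of polyhedral convex sets) is locally upper Lipschitz at every point of its graph:
`F(x) ⊆ F(x̄) + κ‖x − x̄‖ B` for all `x` near `x̄`. -/
theorem polyhedral_multifunction_locally_upper_lipschitz
    {X Y : Type*} [NormedAddCommGroup X] [InnerProductSpace ℝ X] [FiniteDimensional ℝ X]
    [NormedAddCommGroup Y] [InnerProductSpace ℝ Y] [FiniteDimensional ℝ Y]
    (F : X → Set Y)
    (hpoly : ∃ (k : ℕ) (C : Fin k → Set (X × Y)),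
      (∀ i, IsPolyhedral (C i)) ∧ (∀ i, Convex ℝ (C i)) ∧
      {p : X × Y | p.2 ∈ F p.1} = ⋃ i, C i)
    (xb : X) (yb : Y) (hgph : yb ∈ F xb) :
    ∃ κ > (0 : ℝ), ∃ ε > (0 : ℝ), ∀ x : X, ‖x - xb‖ ≤ ε →
      ∀ y ∈ F x, ∃ y' ∈ F xb, ‖y - y'‖ ≤ κ * ‖x - xb‖ :=
  polyhedral_multifunction_locally_upper_lipschitz_general F hpoly xb
end
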